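/- Let G be a group acting faithfully on a set S. Given a partition of 𝔠^S into finitely many cones B(φ_1),…,B(φ_n), another partition into the same number of cones B(ψ_1),…,B(ψ_n), and elements γ_1,…,γ_n ∈ G, there is a well-defined bijection f of 𝔠^S whose restriction to each B(φ_i) equals the twist homeomorphism h_{ψ_i} ∘ τ_{γ_i} ∘ h_{φ_i}⁻¹ : B(φ_i) → B(ψ_i), and f is a homeomorphism of 𝔠^S. -/

import Mathlib

open Function Set Pointwise

/-- The Cantor set `𝔠 = ℕ → Bool`, with the product topology. -/
abbrev Cantor : Type := ℕ → Bool

/-- The space `𝔠^S` of functions `S → 𝔠`, with the product topology. -/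
abbrev CantorPow (S : Type*) : Type _ := S → Cantor

/-- Prepend a finite string of bits to an infinite sequence of bits. -/
def prepend (l : List Bool) (x : Cantor) : Cantor :=
  fun n => if h : n < l.length then l.get ⟨n, h⟩ else x (n - l.length)

/-- A prefix function: finitely supported assignment of finite binary strings. -/
def IsPrefixFun {S : Type*} (ψ : S → List Bool) : Prop :=
  {s | ψ s ≠ []}.Finite

/-- The canonical map `h_ψ : 𝔠^S → 𝔠^S` with image the cone `B(ψ)`. -/
def canonMap {S : Type*} (ψ : S → List Bool) : CantorPow S → CantorPow S :=
  fun κ s => prepend (ψ s) (κ s)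

/-- The cone `B(ψ)`: all `κ` such that `ψ s` is an initial segment of `κ s` for all `s`. -/
def Cone {S : Type*} (ψ : S → List Bool) : Set (CantorPow S) :=
  {κ | ∀ s, ∀ i : Fin (ψ s).length, κ s i = (ψ s).get i}

/-- Deleting the prefixes `ψ s`; on `B(ψ)` this is the inverse of `canonMap ψ`. -/
def dropPrefix {S : Type*} (ψ : S → List Bool) : CantorPow S → CantorPow S :=
  fun κ s n => κ s (n + (ψ s).length)

/-- The basic twist map `τ_γ`, given by `τ_γ(κ)(s) = κ(γ⁻¹ • s)`. -/
def twist {G : Type*} (S : Type*) [Group G] [MulAction G S] (γ : G) :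
    CantorPow S → CantorPow S :=
  fun κ s => κ (γ⁻¹ • s)

/-- The twist homeomorphism `h_ψ ∘ τ_γ ∘ h_φ⁻¹ : B(φ) → B(ψ)`, as a globally
defined function (its restriction to `B(φ)` is the twist homeomorphism). -/
def twistMap {G S : Type*} [Group G] [MulAction G S]
    (φ ψ : S → List Bool) (γ : G) : CantorPow S → CantorPow S :=
  canonMap ψ ∘ twist S γ ∘ dropPrefix φ

/-- A partition of `𝔠^S` into finitely many cones. -/
def IsConePartition {S : Type*} {n : ℕ} (φ : Fin n → S → List Bool) : Prop :=
  (∀ i, IsPrefixFun (φ i)) ∧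
  (Pairwise fun i j => Disjoint (Cone (φ i)) (Cone (φ j))) ∧
  (⋃ i, Cone (φ i)) = Set.univ

/-- The group structure on self-homeomorphisms, with `(f * g) x = f (g x)`. -/
instance Homeomorph.instGroupSelf {α : Type*} [TopologicalSpace α] : Group (α ≃ₜ α) where
  mul f g := g.trans f
  one := Homeomorph.refl α
  inv := Homeomorph.symm
  mul_assoc _ _ _ := rfl
  one_mul _ := rfl
  mul_one _ := rfl
  inv_mul_cancel f := Homeomorph.ext fun x => f.symm_apply_apply x

/-- Membership in the twisted Brin–Thompson group `SV_G`: `f` is a piecewise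
twist homeomorphism with respect to finite cone partitions. -/
def InTwistedBT (G : Type*) {S : Type*} [Group G] [MulAction G S]
    (f : CantorPow S ≃ₜ CantorPow S) : Prop :=
  ∃ (n : ℕ) (φ ψ : Fin n → S → List Bool) (γ : Fin n → G),
    IsConePartition φ ∧ IsConePartition ψ ∧
    ∀ i, Set.EqOn f (twistMap (φ i) (ψ i) (γ i)) (Cone (φ i))

/-- A group is finitely presented if it is the quotient of a finitely generated
free group by the normal closure of finitely many relators. -/
def IsFinitelyPresentedGroup (Γ : Type*) [Group Γ] : Prop :=
  ∃ (n : ℕ) (R : Set (FreeGroup (Fin n))), R.Finite ∧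
    Nonempty (Γ ≃* FreeGroup (Fin n) ⧸ Subgroup.normalClosure R)

/-- An action is oligomorphic if for each `k ≥ 1` there are finitely many orbits
of `k`-element subsets. -/
def IsOligomorphic (G S : Type*) [Group G] [MulAction G S] : Prop :=
  ∀ k : ℕ, 1 ≤ k → ∃ F : Finset (Set S),
    ∀ T : Set S, T.Finite → T.ncard = k → ∃ T₀ ∈ F, ∃ g : G, g • T = T₀

/-- The word metric with respect to a generating set `A`. -/
noncomputable def wordDist {Γ : Type*} [Group Γ] (A : Set Γ) (g h : Γ) : ℕ :=
  sInf {n | ∃ l : List Γ, l.length = n ∧ (∀ x ∈ l, x ∈ A ∨ x⁻¹ ∈ A) ∧ l.prod = g⁻¹ * h}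

/-- A quasi-isometric embedding with respect to `ℕ`-valued metrics. -/
def IsQIEmbedding {X Y : Type*} (dX : X → X → ℕ) (dY : Y → Y → ℕ) (f : X → Y) : Prop :=
  ∃ C D : ℝ, 1 ≤ C ∧ 0 ≤ D ∧ ∀ x y : X,
    (dX x y : ℝ) / C - D ≤ (dY (f x) (f y) : ℝ) ∧
    (dY (f x) (f y) : ℝ) ≤ C * (dX x y : ℝ) + D

/-!
Each cone of a prefix function is open, since it constrains only finitely many bits. On
each cone `B(φ_i)` of the partition the map is forced to be the continuous map
`h_{ψ_i} ∘ τ_{γ_i} ∘ h_{φ_i}⁻¹`, so gluing these maps gives the unique candidate, and it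
is continuous because it agrees with a continuous map near every point. Gluing the
reverse twists `h_{φ_i} ∘ τ_{γ_i⁻¹} ∘ h_{ψ_i}⁻¹` over the partition `B(ψ_i)` gives a
continuous inverse.
-/

section Twist

variable {S : Type*}

lemma dropPrefix_canonMap (φ : S → List Bool) (κ : CantorPow S) :
    dropPrefix φ (canonMap φ κ) = κ := by
  funext s m
  simp [dropPrefix, canonMap, prepend]

lemma canonMap_dropPrefix (φ : S → List Bool) {κ : CantorPow S} (h : κ ∈ Cone φ) :
    canonMap φ (dropPrefix φ κ) = κ := by
  funext s m
  by_cases hm : m < (φ s).length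
  · simpa [canonMap, prepend, hm] using (h s ⟨m, hm⟩).symm
  · simp [canonMap, prepend, dropPrefix, hm, Nat.sub_add_cancel (le_of_not_gt hm)]

lemma canonMap_mem_cone (φ : S → List Bool) (κ : CantorPow S) : canonMap φ κ ∈ Cone φ := by
  intro s i
  simp [canonMap, prepend, i.isLt]

lemma cone_eq_biInter (φ : S → List Bool) :
    Cone φ =
      ⋂ s ∈ {s | φ s ≠ []}, ⋂ i : Fin (φ s).length, {κ | κ s i = (φ s).get i} := by
  ext κ
  simp only [Cone, mem_ofPred_eq, mem_iInter]
  exact ⟨fun h s _ i => h s i, fun h s i => h s (List.ne_nil_of_length_pos i.pos) i⟩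

lemma IsPrefixFun.isOpen_cone {φ : S → List Bool} (h : IsPrefixFun φ) : IsOpen (Cone φ) := by
  rw [cone_eq_biInter]
  exact h.isOpen_biInter fun s _ => isOpen_iInter_of_finite fun i =>
    (continuous_apply_apply (ρ := fun _ _ => Bool) s (i : ℕ)).isOpen_preimage {(φ s).get i}
      (isOpen_discrete _)

lemma continuous_canonMap (ψ : S → List Bool) : Continuous (canonMap ψ) := by
  refine continuous_pi fun s => continuous_pi fun m => ?_
  by_cases hm : m < (ψ s).length
  · simpa [canonMap, prepend, hm] using continuous_const
  · simpa [canonMap, prepend, hm, Function.comp_def] using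
      (continuous_apply (m - (ψ s).length)).comp (continuous_apply s)

lemma continuous_dropPrefix (φ : S → List Bool) : Continuous (dropPrefix φ) :=
  continuous_pi fun s => continuous_pi fun m =>
    (continuous_apply (m + (φ s).length)).comp (continuous_apply s)

variable {G : Type*} [Group G] [MulAction G S]

lemma twist_inv_twist (γ : G) (κ : CantorPow S) : twist S γ⁻¹ (twist S γ κ) = κ := by
  funext s
  simp [twist]

lemma continuous_twist (γ : G) : Continuous (twist S γ) :=
  continuous_pi fun s => continuous_apply (γ⁻¹ • s)

lemma twistMap_mem_cone (φ ψ : S → List Bool) (γ : G) (κ : CantorPow S) :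
    twistMap φ ψ γ κ ∈ Cone ψ :=
  canonMap_mem_cone ψ _

lemma twistMap_inv_twistMap (φ ψ : S → List Bool) (γ : G) {κ : CantorPow S}
    (h : κ ∈ Cone φ) : twistMap ψ φ γ⁻¹ (twistMap φ ψ γ κ) = κ := by
  simp only [twistMap, Function.comp_apply]
  rw [dropPrefix_canonMap, twist_inv_twist, canonMap_dropPrefix φ h]

lemma continuous_twistMap (φ ψ : S → List Bool) (γ : G) : Continuous (twistMap φ ψ γ) :=
  (continuous_canonMap ψ).comp ((continuous_twist γ).comp (continuous_dropPrefix φ))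

end Twist

namespace IsConePartition

variable {S : Type*} {n : ℕ} {φ : Fin n → S → List Bool}

noncomputable def index (hφ : IsConePartition φ) (κ : CantorPow S) : Fin n :=
  (iUnion_eq_univ_iff.mp hφ.2.2 κ).choose

lemma mem_cone_index (hφ : IsConePartition φ) (κ : CantorPow S) :
    κ ∈ Cone (φ (hφ.index κ)) :=
  (iUnion_eq_univ_iff.mp hφ.2.2 κ).choose_spec

lemma index_eq_of_mem (hφ : IsConePartition φ) {κ : CantorPow S} {i : Fin n}
    (h : κ ∈ Cone (φ i)) : hφ.index κ = i := by
  by_contra hne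
  exact disjoint_left.mp (hφ.2.1 hne) (hφ.mem_cone_index κ) h

noncomputable def glue {X : Type*} (hφ : IsConePartition φ) (f : Fin n → CantorPow S → X) :
    CantorPow S → X :=
  fun κ => f (hφ.index κ) κ

variable {X : Type*} (hφ : IsConePartition φ) (f : Fin n → CantorPow S → X)

lemma glue_eqOn (i : Fin n) : EqOn (hφ.glue f) (f i) (Cone (φ i)) := fun κ h => by
  rw [glue, hφ.index_eq_of_mem h]

lemma eq_glue_of_eqOn {g : CantorPow S → X} (hg : ∀ i, EqOn g (f i) (Cone (φ i))) :
    g = hφ.glue f :=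
  funext fun κ => hg _ (hφ.mem_cone_index κ)

lemma continuous_glue [TopologicalSpace X] (hf : ∀ i, Continuous (f i)) :
    Continuous (hφ.glue f) :=
  continuous_of_cover_nhds
    (fun κ => ⟨hφ.index κ, (hφ.1 _).isOpen_cone.mem_nhds (hφ.mem_cone_index κ)⟩)
    fun i => (hf i).continuousOn.congr (hφ.glue_eqOn f i)

variable {G : Type*} [Group G] [MulAction G S] {ψ : Fin n → S → List Bool}

lemma glue_twistMap_leftInverse (hψ : IsConePartition ψ) (γ : Fin n → G) :
    LeftInverse (hψ.glue fun i => twistMap (ψ i) (φ i) (γ i)⁻¹)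
      (hφ.glue fun i => twistMap (φ i) (ψ i) (γ i)) := fun κ => by
  set i := hφ.index κ
  rw [hφ.glue_eqOn _ i (hφ.mem_cone_index κ), hψ.glue_eqOn _ i (twistMap_mem_cone _ _ _ _)]
  exact twistMap_inv_twistMap _ _ _ (hφ.mem_cone_index κ)

noncomputable def twistHomeomorph (hψ : IsConePartition ψ) (γ : Fin n → G) :
    CantorPow S ≃ₜ CantorPow S where
  toFun := hφ.glue fun i => twistMap (φ i) (ψ i) (γ i)
  invFun := hψ.glue fun i => twistMap (ψ i) (φ i) (γ i)⁻¹
  left_inv := hφ.glue_twistMap_leftInverse hψ γ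
  right_inv := by
    have h := hψ.glue_twistMap_leftInverse hφ fun i => (γ i)⁻¹
    simp only [inv_inv] at h
    exact h
  continuous_toFun := hφ.continuous_glue _ fun i => continuous_twistMap _ _ _
  continuous_invFun := hψ.continuous_glue _ fun i => continuous_twistMap _ _ _

end IsConePartition

theorem stmt3_general (G S : Type*) [Group G] [MulAction G S]
    {n : ℕ} (φ ψ : Fin n → S → List Bool) (γ : Fin n → G)
    (hφ : IsConePartition φ) (hψ : IsConePartition ψ) :
    ∃ f : CantorPow S ≃ₜ CantorPow S,
      (∀ i, Set.EqOn f (twistMap (φ i) (ψ i) (γ i)) (Cone (φ i))) ∧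
      ∀ g : CantorPow S → CantorPow S,
        (∀ i, Set.EqOn g (twistMap (φ i) (ψ i) (γ i)) (Cone (φ i))) →
        g = f :=
  let f i := twistMap (φ i) (ψ i) (γ i)
  ⟨hφ.twistHomeomorph hψ γ, hφ.glue_eqOn f, fun _ hg => hφ.eq_glue_of_eqOn f hg⟩

/-- Given a partition of `𝔠^S` into cones `B(φ_1),…,B(φ_n)`, another
partition into the same number of cones `B(ψ_1),…,B(ψ_n)`, and twists
`γ_1,…,γ_n ∈ G`, there is a well-defined (unique) bijection `f` of `𝔠^S` whose
restriction to each `B(φ_i)` is the twist homeomorphism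
`h_{ψ_i} ∘ τ_{γ_i} ∘ h_{φ_i}⁻¹ : B(φ_i) → B(ψ_i)`, and `f` is a homeomorphism. -/
theorem stmt3 (G S : Type*) [Group G] [MulAction G S] [FaithfulSMul G S]
    {n : ℕ} (φ ψ : Fin n → S → List Bool) (γ : Fin n → G)
    (hφ : IsConePartition φ) (hψ : IsConePartition ψ) :
    ∃ f : CantorPow S ≃ₜ CantorPow S,
      (∀ i, Set.EqOn f (twistMap (φ i) (ψ i) (γ i)) (Cone (φ i))) ∧
      ∀ g : CantorPow S → CantorPow S,
        (∀ i, Set.EqOn g (twistMap (φ i) (ψ i) (γ i)) (Cone (φ i))) →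
        g = f :=
  stmt3_general G S φ ψ γ hφ hψ
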